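/- Let Ω be a connected weighted simplicial complex on [n] with an action of a finite group G whose action on [n] is blending. Then for every G-invariant p ∈ 𝒫 there exist q₁, q₂ ∈ 𝒫, each admitting an (Ω,G)-decomposition, with p = q₁ − q₂. If n is even, one may take q₂ = 0, i.e. p itself admits an (Ω,G)-decomposition. -/

import Mathlib

namespace PolyDec

open MvPolynomial

attribute [local instance] Classical.propDecidable

noncomputable section

/-! ### Weighted simplicial complexes -/

/-- `Ω` is a weighted simplicial complex on `[n] = {0,…,n}`. -/
def IsWSC {n : ℕ} (Ω : Finset (Fin (n + 1)) → ℕ) : Prop :=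
  (∀ S T : Finset (Fin (n + 1)), S ⊆ T → Ω S ∣ Ω T) ∧ ∀ i : Fin (n + 1), Ω {i} ≠ 0

/-- `F` is a facet of `Ω`: a maximal simplex. -/
def IsFacet {n : ℕ} (Ω : Finset (Fin (n + 1)) → ℕ) (F : Finset (Fin (n + 1))) : Prop :=
  Ω F ≠ 0 ∧ ∀ S : Finset (Fin (n + 1)), Ω S ≠ 0 → F ⊆ S → S = F

/-- `Ω` is connected: any two vertices are joined by a chain of vertices such that
consecutive ones share a facet. -/
def Conn {n : ℕ} (Ω : Finset (Fin (n + 1)) → ℕ) : Prop :=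
  ∀ i j : Fin (n + 1),
    Relation.ReflTransGen
      (fun a b => ∃ F : Finset (Fin (n + 1)), IsFacet Ω F ∧ a ∈ F ∧ b ∈ F) i j

/-- The multiset of facets `ℱ̃`: each facet `F` appears with multiplicity `Ω F`. -/
abbrev MultiFacet {n : ℕ} (Ω : Finset (Fin (n + 1)) → ℕ) : Type :=
  Σ F : {F : Finset (Fin (n + 1)) // IsFacet Ω F}, Fin (Ω F.1)

/-- The sub-multiset `ℱ̃ᵢ` of multifacets containing the vertex `i`. -/
abbrev MFi {n : ℕ} (Ω : Finset (Fin (n + 1)) → ℕ) (i : Fin (n + 1)) : Type :=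
  {F : MultiFacet Ω // i ∈ F.1.1}

/-- Restriction `α|ᵢ` of `α : ℱ̃ → I` to `ℱ̃ᵢ`. -/
def restr {n : ℕ} {Ω : Finset (Fin (n + 1)) → ℕ} {I : Type} (α : MultiFacet Ω → I)
    (i : Fin (n + 1)) : MFi Ω i → I :=
  fun F => α F.1

/-! ### Group actions on a weighted simplicial complex -/

/-- An action of a group `G` on the weighted simplicial complex `Ω`:
an action on the vertices leaving `Ω` invariant, together with a refinement to an action on
the multiset of facets which is compatible with the collapse map. -/
structure GAct {n : ℕ} (Ω : Finset (Fin (n + 1)) → ℕ) (G : Type) [Group G] where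
  act : G →* Equiv.Perm (Fin (n + 1))
  omega_inv : ∀ (g : G) (S : Finset (Fin (n + 1))), Ω (S.image (act g)) = Ω S
  actF : G →* Equiv.Perm (MultiFacet Ω)
  collapse : ∀ (g : G) (F : MultiFacet Ω), (actF g F).1.1 = F.1.1.image (act g)

variable {n : ℕ} {Ω : Finset (Fin (n + 1)) → ℕ} {G : Type} [Group G]

/-- The action is free on `ℱ̃`. -/
def GAct.Free (A : GAct Ω G) : Prop :=
  ∀ (g : G) (F : MultiFacet Ω), A.actF g F = F → g = 1

/-- The action on the vertices is blending. -/
def GAct.Blending (A : GAct Ω G) : Prop :=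
  ∀ gs : Fin (n + 1) → G,
    (Function.Surjective fun i => A.act (gs i) i) →
      ∃ g : G, ∀ i, A.act g i = A.act (gs i) i

theorem GAct.mem_shift (A : GAct Ω G) (g : G) (i : Fin (n + 1)) (F : MFi Ω (A.act g i)) :
    i ∈ (A.actF g⁻¹ F.1).1.1 := by
  rw [A.collapse]
  refine Finset.mem_image.2 ⟨A.act g i, F.2, ?_⟩
  rw [map_inv]
  exact Equiv.symm_apply_apply _ _

/-- For `β : ℱ̃ᵢ → I`, the shifted function `ᵍβ : ℱ̃_{g·i} → I`, `(ᵍβ)(F) = β (g⁻¹·F)`. -/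
def GAct.shift (A : GAct Ω G) (g : G) (i : Fin (n + 1)) {I : Type} (β : MFi Ω i → I) :
    MFi Ω (A.act g i) → I :=
  fun F => β ⟨A.actF g⁻¹ F.1, A.mem_shift g i F⟩

/-! ### Polynomial spaces -/

/-- The space `𝒫 = ℝ[x⁽⁰⁾,…,x⁽ⁿ⁾]`, where block `i` has `m i` variables. -/
abbrev PSpace {n : ℕ} (m : Fin (n + 1) → ℕ) : Type :=
  MvPolynomial (Σ i : Fin (n + 1), Fin (m i)) ℝ

/-- The local space `ℝ[x⁽ⁱ⁾]`. -/
abbrev LSpace {n : ℕ} (m : Fin (n + 1) → ℕ) (i : Fin (n + 1)) : Type :=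
  MvPolynomial (Fin (m i)) ℝ

/-- The inclusion `ℝ[x⁽ⁱ⁾] → 𝒫`. -/
def emb {n : ℕ} (m : Fin (n + 1) → ℕ) (i : Fin (n + 1)) : LSpace m i →ₐ[ℝ] PSpace m :=
  rename fun j => (⟨i, j⟩ : Σ i : Fin (n + 1), Fin (m i))

variable {m : Fin (n + 1) → ℕ}

/-- The variable permutation `x⁽ⁱ⁾ ↦ x⁽ᵍ·ⁱ⁾` induced by `g`. -/
def permVar (A : GAct Ω G) (hm : ∀ (g : G) (i : Fin (n + 1)), m (A.act g i) = m i) (g : G) :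
    (Σ i : Fin (n + 1), Fin (m i)) → Σ i : Fin (n + 1), Fin (m i) :=
  fun v => ⟨A.act g v.1, Fin.cast (hm g v.1).symm v.2⟩

/-- `p` is `G`-invariant: `p(x⁽ᵍ⁰⁾,…,x⁽ᵍⁿ⁾) = p(x⁽⁰⁾,…,x⁽ⁿ⁾)` for all `g ∈ G`. -/
def GInvPoly (A : GAct Ω G) (hm : ∀ (g : G) (i : Fin (n + 1)), m (A.act g i) = m i)
    (p : PSpace m) : Prop :=
  ∀ g : G, rename (permVar A hm g) p = p

/-! ### Sums of squares, cones -/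

/-- `p` is a sum of squares. -/
def IsSos {σ : Type} (p : MvPolynomial σ ℝ) : Prop :=
  ∃ (N : ℕ) (q : Fin N → MvPolynomial σ ℝ), p = ∑ k : Fin N, q k ^ 2

/-- `C` is a convex cone. -/
def IsConvexConeSet {V : Type} [AddCommMonoid V] [Module ℝ V] (C : Set V) : Prop :=
  ∀ p ∈ C, ∀ q ∈ C, ∀ a b : ℝ, 0 ≤ a → 0 ≤ b → a • p + b • q ∈ C

/-- The local cones agree along orbits, `C⁽ᵍ·ⁱ⁾ = C⁽ⁱ⁾` (under the renaming identification). -/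
def ConeCompat (A : GAct Ω G) (hm : ∀ (g : G) (i : Fin (n + 1)), m (A.act g i) = m i)
    (C : ∀ i : Fin (n + 1), Set (LSpace m i)) : Prop :=
  ∀ (g : G) (i : Fin (n + 1)) (q : LSpace m (A.act g i)),
    q ∈ C (A.act g i) ↔ rename (Fin.cast (hm g i)) q ∈ C i

/-- The separable cone `C_sep = C⁽⁰⁾ ⊗ ⋯ ⊗ C⁽ⁿ⁾`. -/
def SepCone {n : ℕ} (m : Fin (n + 1) → ℕ) (C : ∀ i : Fin (n + 1), Set (LSpace m i)) :
    Set (PSpace m) :=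
  {p | ∃ (r : ℕ) (q : Fin r → ∀ i : Fin (n + 1), LSpace m i),
    (∀ j i, q j i ∈ C i) ∧ p = ∑ j : Fin r, ∏ i : Fin (n + 1), emb m i (q j i)}

/-! ### Decompositions and ranks -/

/-- `p` has an `Ω`-decomposition with index set of size `r`. -/
def HasODec {n : ℕ} (Ω : Finset (Fin (n + 1)) → ℕ) (m : Fin (n + 1) → ℕ) (p : PSpace m)
    (r : ℕ) : Prop :=
  ∃ q : ∀ i : Fin (n + 1), (MFi Ω i → Fin r) → LSpace m i,
    p = ∑ α : MultiFacet Ω → Fin r, ∏ i : Fin (n + 1), emb m i (q i (restr α i))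

/-- The `Ω`-rank of `p` (`⊤` if there is no decomposition). -/
def ORank {n : ℕ} (Ω : Finset (Fin (n + 1)) → ℕ) (m : Fin (n + 1) → ℕ) (p : PSpace m) : ℕ∞ :=
  ⨅ r : {r : ℕ // HasODec Ω m p r}, (r.1 : ℕ∞)

/-- `p` has an `(Ω,G)`-decomposition with index set of size `r`. -/
def HasOGDec (A : GAct Ω G) (hm : ∀ (g : G) (i : Fin (n + 1)), m (A.act g i) = m i)
    (p : PSpace m) (r : ℕ) : Prop :=
  ∃ q : ∀ i : Fin (n + 1), (MFi Ω i → Fin r) → LSpace m i,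
    (p = ∑ α : MultiFacet Ω → Fin r, ∏ i : Fin (n + 1), emb m i (q i (restr α i))) ∧
    ∀ (g : G) (i : Fin (n + 1)) (β : MFi Ω i → Fin r),
      rename (Fin.cast (hm g i)) (q (A.act g i) (A.shift g i β)) = q i β

/-- The `(Ω,G)`-rank of `p`. -/
def OGRank (A : GAct Ω G) (hm : ∀ (g : G) (i : Fin (n + 1)), m (A.act g i) = m i)
    (p : PSpace m) : ℕ∞ :=
  ⨅ r : {r : ℕ // HasOGDec A hm p r}, (r.1 : ℕ∞)

/-- `p` has a decomposition on the simplex `Σₙ` (a plain tensor decomposition) of size `r`. -/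
def HasTDec {n : ℕ} (m : Fin (n + 1) → ℕ) (p : PSpace m) (r : ℕ) : Prop :=
  ∃ q : Fin r → ∀ i : Fin (n + 1), LSpace m i,
    p = ∑ j : Fin r, ∏ i : Fin (n + 1), emb m i (q j i)

/-- The tensor rank `rank_{Σₙ}(p)`. -/
def TRank {n : ℕ} (m : Fin (n + 1) → ℕ) (p : PSpace m) : ℕ∞ :=
  ⨅ r : {r : ℕ // HasTDec m p r}, (r.1 : ℕ∞)

/-- Separable `Ω`-decomposition w.r.t. the local cones `C`. -/
def HasSepODec {n : ℕ} (Ω : Finset (Fin (n + 1)) → ℕ) (m : Fin (n + 1) → ℕ)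
    (C : ∀ i : Fin (n + 1), Set (LSpace m i)) (p : PSpace m) (r : ℕ) : Prop :=
  ∃ q : ∀ i : Fin (n + 1), (MFi Ω i → Fin r) → LSpace m i,
    (p = ∑ α : MultiFacet Ω → Fin r, ∏ i : Fin (n + 1), emb m i (q i (restr α i))) ∧
    ∀ i β, q i β ∈ C i

/-- The separable `Ω`-rank. -/
def SepORank {n : ℕ} (Ω : Finset (Fin (n + 1)) → ℕ) (m : Fin (n + 1) → ℕ)
    (C : ∀ i : Fin (n + 1), Set (LSpace m i)) (p : PSpace m) : ℕ∞ :=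
  ⨅ r : {r : ℕ // HasSepODec Ω m C p r}, (r.1 : ℕ∞)

/-- Separable `(Ω,G)`-decomposition w.r.t. the local cones `C`. -/
def HasSepOGDec (A : GAct Ω G) (hm : ∀ (g : G) (i : Fin (n + 1)), m (A.act g i) = m i)
    (C : ∀ i : Fin (n + 1), Set (LSpace m i)) (p : PSpace m) (r : ℕ) : Prop :=
  ∃ q : ∀ i : Fin (n + 1), (MFi Ω i → Fin r) → LSpace m i,
    (p = ∑ α : MultiFacet Ω → Fin r, ∏ i : Fin (n + 1), emb m i (q i (restr α i))) ∧
    (∀ (g : G) (i : Fin (n + 1)) (β : MFi Ω i → Fin r),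
      rename (Fin.cast (hm g i)) (q (A.act g i) (A.shift g i β)) = q i β) ∧
    ∀ i β, q i β ∈ C i

/-- The separable `(Ω,G)`-rank. -/
def SepOGRank (A : GAct Ω G) (hm : ∀ (g : G) (i : Fin (n + 1)), m (A.act g i) = m i)
    (C : ∀ i : Fin (n + 1), Set (LSpace m i)) (p : PSpace m) : ℕ∞ :=
  ⨅ r : {r : ℕ // HasSepOGDec A hm C p r}, (r.1 : ℕ∞)

/-- Separable decomposition on the simplex `Σₙ`. -/
def HasSepTDec {n : ℕ} (m : Fin (n + 1) → ℕ) (C : ∀ i : Fin (n + 1), Set (LSpace m i))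
    (p : PSpace m) (r : ℕ) : Prop :=
  ∃ q : Fin r → ∀ i : Fin (n + 1), LSpace m i,
    (∀ j i, q j i ∈ C i) ∧ p = ∑ j : Fin r, ∏ i : Fin (n + 1), emb m i (q j i)

/-- The separable rank on the simplex. -/
def SepTRank {n : ℕ} (m : Fin (n + 1) → ℕ) (C : ∀ i : Fin (n + 1), Set (LSpace m i))
    (p : PSpace m) : ℕ∞ :=
  ⨅ r : {r : ℕ // HasSepTDec m C p r}, (r.1 : ℕ∞)

/-- `p` has a sum-of-squares `(Ω,G)`-decomposition of size `r`: a `G`-invariant family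
`𝔮 = (q_k)` with `p = ∑ q_k²` together with an `(Ω,G)`-decomposition of the family. -/
def HasSosOGDec (A : GAct Ω G) (hm : ∀ (g : G) (i : Fin (n + 1)), m (A.act g i) = m i)
    (p : PSpace m) (r : ℕ) : Prop :=
  ∃ (s : Fin (n + 1) → ℕ) (hs : ∀ (g : G) (i : Fin (n + 1)), s (A.act g i) = s i)
    (q : ∀ i : Fin (n + 1), Fin (s i) → (MFi Ω i → Fin r) → LSpace m i),
    (p = ∑ k : ∀ i : Fin (n + 1), Fin (s i),
        (∑ α : MultiFacet Ω → Fin r, ∏ i : Fin (n + 1), emb m i (q i (k i) (restr α i))) ^ 2) ∧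
    ∀ (g : G) (i : Fin (n + 1)) (kk : Fin (s i)) (β : MFi Ω i → Fin r),
      rename (Fin.cast (hm g i))
        (q (A.act g i) (Fin.cast (hs g i).symm kk) (A.shift g i β)) = q i kk β

/-- The sos `(Ω,G)`-rank. -/
def SosOGRank (A : GAct Ω G) (hm : ∀ (g : G) (i : Fin (n + 1)), m (A.act g i) = m i)
    (p : PSpace m) : ℕ∞ :=
  ⨅ r : {r : ℕ // HasSosOGDec A hm p r}, (r.1 : ℕ∞)

/-! ### Local degree -/

/-- Every monomial of `p` has degree at most `d` in each block of variables. -/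
def locDegLE {n : ℕ} (m : Fin (n + 1) → ℕ) (p : PSpace m) (d : ℕ) : Prop :=
  ∀ s ∈ p.support, ∀ i : Fin (n + 1), (∑ j : Fin (m i), s ⟨i, j⟩) ≤ d

/-- The local degree of `p`. -/
def locDeg {n : ℕ} (m : Fin (n + 1) → ℕ) (p : PSpace m) : ℕ :=
  sInf {d : ℕ | locDegLE m p d}

/-! ### Tensor decompositions -/

/-- `(Ω,G)`-decomposition of a tensor `T ∈ ℝ^mv ⊗ ⋯ ⊗ ℝ^mv`. -/
def HasTOGDec (A : GAct Ω G) (mv : ℕ) (T : (Fin (n + 1) → Fin mv) → ℝ) (r : ℕ) : Prop :=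
  ∃ v : ∀ i : Fin (n + 1), (MFi Ω i → Fin r) → Fin mv → ℝ,
    (∀ jf : Fin (n + 1) → Fin mv,
      T jf = ∑ α : MultiFacet Ω → Fin r, ∏ i : Fin (n + 1), v i (restr α i) (jf i)) ∧
    ∀ (g : G) (i : Fin (n + 1)) (β : MFi Ω i → Fin r), v (A.act g i) (A.shift g i β) = v i β

/-- The `(Ω,G)`-rank of a tensor. -/
def TOGRank (A : GAct Ω G) (mv : ℕ) (T : (Fin (n + 1) → Fin mv) → ℝ) : ℕ∞ :=
  ⨅ r : {r : ℕ // HasTOGDec A mv T r}, (r.1 : ℕ∞)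

/-- Nonnegative `(Ω,G)`-decomposition of a tensor. -/
def HasNNTOGDec (A : GAct Ω G) (mv : ℕ) (T : (Fin (n + 1) → Fin mv) → ℝ) (r : ℕ) : Prop :=
  ∃ v : ∀ i : Fin (n + 1), (MFi Ω i → Fin r) → Fin mv → ℝ,
    (∀ jf : Fin (n + 1) → Fin mv,
      T jf = ∑ α : MultiFacet Ω → Fin r, ∏ i : Fin (n + 1), v i (restr α i) (jf i)) ∧
    (∀ (g : G) (i : Fin (n + 1)) (β : MFi Ω i → Fin r), v (A.act g i) (A.shift g i β) = v i β) ∧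
    ∀ i β j, 0 ≤ v i β j

/-- The nonnegative `(Ω,G)`-rank of a tensor. -/
def NNTOGRank (A : GAct Ω G) (mv : ℕ) (T : (Fin (n + 1) → Fin mv) → ℝ) : ℕ∞ :=
  ⨅ r : {r : ℕ // HasNNTOGDec A mv T r}, (r.1 : ℕ∞)

/-- Positive semidefinite `(Ω,G)`-decomposition of a tensor. -/
def HasPsdTOGDec (A : GAct Ω G) (mv : ℕ) (T : (Fin (n + 1) → Fin mv) → ℝ) (r : ℕ) : Prop :=
  ∃ E : ∀ i : Fin (n + 1), Fin mv → Matrix (MFi Ω i → Fin r) (MFi Ω i → Fin r) ℝ,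
    (∀ i j, (E i j).PosSemidef) ∧
    (∀ (g : G) (i : Fin (n + 1)) (j : Fin mv) (β β' : MFi Ω i → Fin r),
      E (A.act g i) j (A.shift g i β) (A.shift g i β') = E i j β β') ∧
    ∀ jf : Fin (n + 1) → Fin mv,
      T jf = ∑ α : MultiFacet Ω → Fin r, ∑ α' : MultiFacet Ω → Fin r,
        ∏ i : Fin (n + 1), E i (jf i) (restr α i) (restr α' i)

/-- The positive semidefinite `(Ω,G)`-rank of a tensor. -/
def PsdTOGRank (A : GAct Ω G) (mv : ℕ) (T : (Fin (n + 1) → Fin mv) → ℝ) : ℕ∞ :=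
  ⨅ r : {r : ℕ // HasPsdTOGDec A mv T r}, (r.1 : ℕ∞)

/-- The polynomial `p_T = ∑ T_{j₀…jₙ} (x⁽⁰⁾_{j₀})² ⋯ (x⁽ⁿ⁾_{jₙ})²` associated to a tensor. -/
def pT {n : ℕ} (mv : ℕ) (T : (Fin (n + 1) → Fin mv) → ℝ) :
    PSpace (fun _ : Fin (n + 1) => mv) :=
  ∑ jf : Fin (n + 1) → Fin mv, MvPolynomial.C (T jf) *
    ∏ i : Fin (n + 1), X (⟨i, jf i⟩ : Σ _ : Fin (n + 1), Fin mv) ^ 2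

/-! ### The Gram map -/

/-- Exponent vectors of monomials of degree at most `d` in `mv` variables. -/
abbrev Mon (mv d : ℕ) : Type := {k : Fin mv → Fin (d + 1) // (∑ j : Fin mv, (k j).val) ≤ d}

/-- The monomial at site `i` with exponent vector `k`. -/
def monAt {n : ℕ} {mv d : ℕ} (i : Fin (n + 1)) (k : Mon mv d) :
    PSpace (fun _ : Fin (n + 1) => mv) :=
  ∏ j : Fin mv, X (⟨i, j⟩ : Σ _ : Fin (n + 1), Fin mv) ^ (k.1 j).val

/-- The Gram map `𝒢(M) = 𝔪ᵗ M 𝔪`. -/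
def gram {n : ℕ} {mv d : ℕ}
    (M : Matrix (Fin (n + 1) → Mon mv d) (Fin (n + 1) → Mon mv d) ℝ) :
    PSpace (fun _ : Fin (n + 1) => mv) :=
  ∑ k : Fin (n + 1) → Mon mv d, ∑ k' : Fin (n + 1) → Mon mv d,
    M k k' • ∏ i : Fin (n + 1), (monAt i (k i) * monAt i (k' i))

/-! ### Homogeneous Gram map, norms -/

/-- Exponent vectors of monomials of degree exactly `d` in `mv + 1` variables. -/
abbrev MonH (mv d : ℕ) : Type :=
  {k : Fin (mv + 1) → Fin (d + 1) // (∑ j : Fin (mv + 1), (k j).val) = d}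

/-- The homogeneous monomial at site `i` with exponent vector `k`. -/
def monHAt {n : ℕ} {mv d : ℕ} (i : Fin (n + 1)) (k : MonH mv d) :
    PSpace (fun _ : Fin (n + 1) => mv + 1) :=
  ∏ j : Fin (mv + 1), X (⟨i, j⟩ : Σ _ : Fin (n + 1), Fin (mv + 1)) ^ (k.1 j).val

/-- The Gram map in the homogeneous setting. -/
def gramH {n : ℕ} {mv d : ℕ}
    (M : Matrix (Fin (n + 1) → MonH mv d) (Fin (n + 1) → MonH mv d) ℝ) :
    PSpace (fun _ : Fin (n + 1) => mv + 1) :=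
  ∑ k : Fin (n + 1) → MonH mv d, ∑ k' : Fin (n + 1) → MonH mv d,
    M k k' • ∏ i : Fin (n + 1), (monHAt i (k i) * monHAt i (k' i))

/-- The largest singular value (ℓ²-operator norm) of a real square matrix. -/
def sigmaMax {ι : Type} [Fintype ι] (M : Matrix ι ι ℝ) : ℝ :=
  sSup {r : ℝ | ∃ y : ι → ℝ, (∑ t, y t ^ 2) ≤ 1 ∧ r = Real.sqrt (∑ t, (M.mulVec y t) ^ 2)}

/-- The supremum norm of `p` on `𝕊 = 𝕊^m × ⋯ × 𝕊^m`. -/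
def InfNormH {n mv : ℕ} (p : PSpace (fun _ : Fin (n + 1) => mv + 1)) : ℝ :=
  sSup {r : ℝ | ∃ a : Fin (n + 1) → Fin (mv + 1) → ℝ,
    (∀ i, ∑ j, a i j ^ 2 = 1) ∧
    r = |MvPolynomial.eval (fun v : Σ _ : Fin (n + 1), Fin (mv + 1) => a v.1 v.2) p|}

/-- `p` is homogeneous of degree `d` in each block of variables separately. -/
def MultiHomog {n : ℕ} (m : Fin (n + 1) → ℕ) (d : ℕ) (p : PSpace m) : Prop :=
  ∀ s ∈ p.support, ∀ i : Fin (n + 1), (∑ j : Fin (m i), s ⟨i, j⟩) = d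

/-- `M` is a separable matrix: a sum of elementary tensors of psd matrices. -/
def SepGram {n : ℕ} {mv d : ℕ}
    (M : Matrix (Fin (n + 1) → MonH mv d) (Fin (n + 1) → MonH mv d) ℝ) : Prop :=
  ∃ (N : ℕ) (Ms : Fin N → ∀ _ : Fin (n + 1), Matrix (MonH mv d) (MonH mv d) ℝ),
    (∀ j i, (Ms j i).PosSemidef) ∧
    ∀ k k', M k k' = ∑ j : Fin N, ∏ i : Fin (n + 1), Ms j i (k i) (k' i)

/-- `μ(p)`: the smallest `λ > 0` such that `p = λ·𝒢(M)` for some `G`-invariant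
subnormalized separable matrix `M`. -/
def muP {n : ℕ} {Ω : Finset (Fin (n + 1)) → ℕ} {G : Type} [Group G] (mv d : ℕ) (A : GAct Ω G)
    (p : PSpace (fun _ : Fin (n + 1) => mv + 1)) : ℝ :=
  sInf {l : ℝ | 0 < l ∧
    ∃ M : Matrix (Fin (n + 1) → MonH mv d) (Fin (n + 1) → MonH mv d) ℝ,
      SepGram M ∧ (∑ k, M k k) ≤ 1 ∧
      (∀ (g : G) (k k' : Fin (n + 1) → MonH mv d),
        M (fun i => k (A.act g i)) (fun i => k' (A.act g i)) = M k k') ∧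
      p = l • gramH M}

/-! ### Factorizability -/

/-- `(Ω,G)` is factorizable. -/
def Factorizable (A : GAct Ω G) : Prop :=
  ∀ N : ℕ, ∃ Cf : ∀ i : Fin (n + 1), (MFi Ω i → Fin N) → ℝ,
    (∀ i β, 0 < Cf i β) ∧
    (∀ (g : G) (i : Fin (n + 1)) (β : MFi Ω i → Fin N),
      Cf (A.act g i) (A.shift g i β) = Cf i β) ∧
    ∀ α : MultiFacet Ω → Fin N,
      (∏ i : Fin (n + 1), Cf i (restr α i)) =
        ((Fintype.card {γ : MultiFacet Ω → Fin N //
          ∃ gs : Fin (n + 1) → G, ∀ i : Fin (n + 1), A.act (gs i) i = i ∧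
            ∀ F : MFi Ω i, γ (A.actF (gs i)⁻¹ F.1) = α F.1} : ℕ) : ℝ)⁻¹

/-! ### Two-block (single edge `Λ₁`) ranks -/

/-- The single-edge rank of a two-block polynomial. -/
def rank1 {mv : ℕ} (p : MvPolynomial (Fin mv ⊕ Fin mv) ℝ) : ℕ∞ :=
  ⨅ r : {r : ℕ // ∃ f g : Fin r → MvPolynomial (Fin mv) ℝ,
    p = ∑ α : Fin r, rename Sum.inl (f α) * rename Sum.inr (g α)}, (r.1 : ℕ∞)

/-- The single-edge separable rank (w.r.t. the local sos cones). -/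
def sep1 {mv : ℕ} (p : MvPolynomial (Fin mv ⊕ Fin mv) ℝ) : ℕ∞ :=
  ⨅ r : {r : ℕ // ∃ f g : Fin r → MvPolynomial (Fin mv) ℝ,
    (∀ α, IsSos (f α) ∧ IsSos (g α)) ∧
    p = ∑ α : Fin r, rename Sum.inl (f α) * rename Sum.inr (g α)}, (r.1 : ℕ∞)

/-- The single-edge sos rank. -/
def sos1 {mv : ℕ} (p : MvPolynomial (Fin mv ⊕ Fin mv) ℝ) : ℕ∞ :=
  ⨅ r : {r : ℕ // ∃ (s₀ s₁ : ℕ) (a : Fin s₀ → Fin r → MvPolynomial (Fin mv) ℝ)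
    (b : Fin s₁ → Fin r → MvPolynomial (Fin mv) ℝ),
    p = ∑ k : Fin s₀, ∑ l : Fin s₁,
      (∑ α : Fin r, rename Sum.inl (a k α) * rename Sum.inr (b l α)) ^ 2}, (r.1 : ℕ∞)

/-- The Euclidean-distance-matrix polynomial `p_m = ∑ (i-j)² xᵢ² yⱼ²`. -/
def pm (mv : ℕ) : MvPolynomial (Fin mv ⊕ Fin mv) ℝ :=
  ∑ i : Fin mv, ∑ j : Fin mv,
    MvPolynomial.C (((i : ℕ) : ℝ) - ((j : ℕ) : ℝ)) ^ 2 *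
      (X (Sum.inl i) ^ 2 * X (Sum.inr j) ^ 2)


/-- Constant block sizes are trivially compatible with any group action. -/
theorem constCompat {n : ℕ} {Ω : Finset (Fin (n + 1)) → ℕ} {G : Type} [Group G]
    (A : GAct Ω G) (mv : ℕ) :
    ∀ (g : G) (i : Fin (n + 1)),
      (fun _ : Fin (n + 1) => mv) (A.act g i) = (fun _ : Fin (n + 1) => mv) i :=
  fun _ _ => rfl
/-! ### Auxiliary material for Statement 5 -/

section Statement5Aux

variable {n : ℕ} {Ω : Finset (Fin (n + 1)) → ℕ} {G : Type} [Group G] {m : Fin (n + 1) → ℕ}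

lemma exists_facet_mem (hΩ : IsWSC Ω) (i : Fin (n + 1)) :
    ∃ F, IsFacet Ω F ∧ i ∈ F := by
  obtain ⟨F, hFmem, hmax⟩ := Finset.exists_max_image
    (Finset.univ.filter fun S : Finset (Fin (n + 1)) => Ω S ≠ 0 ∧ i ∈ S) Finset.card
    ⟨{i}, by simp [hΩ.2 i]⟩
  simp only [Finset.mem_filter, Finset.mem_univ, true_and] at hFmem
  refine ⟨F, ⟨hFmem.1, fun S hS hsub => ?_⟩, hFmem.2⟩
  have hSmem : S ∈ Finset.univ.filter fun S : Finset (Fin (n + 1)) => Ω S ≠ 0 ∧ i ∈ S := by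
    simp only [Finset.mem_filter, Finset.mem_univ, true_and]
    exact ⟨hS, hsub hFmem.2⟩
  exact (Finset.eq_of_subset_of_card_le hsub (hmax S hSmem)).symm

lemma facet_nonempty (hΩ : IsWSC Ω) {F : Finset (Fin (n + 1))} (hF : IsFacet Ω F) :
    F.Nonempty := by
  rcases Finset.eq_empty_or_nonempty F with h | h
  · exfalso
    have h0 : ({0} : Finset (Fin (n + 1))) = F := hF.2 {0} (hΩ.2 0) (h ▸ Finset.empty_subset _)
    exact Finset.singleton_ne_empty 0 (h ▸ h0)
  · exact h

lemma mfi_nonempty (hΩ : IsWSC Ω) (i : Fin (n + 1)) : Nonempty (MFi Ω i) := by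
  obtain ⟨F, hF, hi⟩ := exists_facet_mem hΩ i
  exact ⟨⟨⟨⟨F, hF⟩, ⟨0, Nat.pos_of_ne_zero hF.1⟩⟩, hi⟩⟩

lemma multiFacet_nonempty (hΩ : IsWSC Ω) : Nonempty (MultiFacet Ω) :=
  ⟨((mfi_nonempty hΩ 0).some).1⟩

lemma locally_const (hΩ : IsWSC Ω) (hconn : Conn Ω) {I : Type*} (α : MultiFacet Ω → I)
    (hloc : ∀ i, ∃ c, ∀ F : MFi Ω i, α F.1 = c) :
    ∀ F F' : MultiFacet Ω, α F = α F' := by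
  have hval : ∀ (i : Fin (n + 1)) (F : MultiFacet Ω) (hi : i ∈ F.1.1),
      α F = (hloc i).choose := fun i F hi => (hloc i).choose_spec ⟨F, hi⟩
  have hadj : ∀ i j : Fin (n + 1), (∃ F, IsFacet Ω F ∧ i ∈ F ∧ j ∈ F) →
      (hloc i).choose = (hloc j).choose := by
    rintro i j ⟨F, hF, hi, hj⟩
    have h0 : 0 < Ω F := Nat.pos_of_ne_zero hF.1
    rw [← hval i ⟨⟨F, hF⟩, ⟨0, h0⟩⟩ hi, hval j ⟨⟨F, hF⟩, ⟨0, h0⟩⟩ hj]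
  have hall : ∀ i j : Fin (n + 1), (hloc i).choose = (hloc j).choose := by
    intro i j
    induction hconn i j with
    | refl => rfl
    | tail _ hbc ih => exact ih.trans (hadj _ _ hbc)
  intro F F'
  obtain ⟨a, ha⟩ := facet_nonempty hΩ F.1.2
  obtain ⟨b, hb⟩ := facet_nonempty hΩ F'.1.2
  rw [hval a F ha, hval b F' hb, hall a b]

lemma GAct.mem_actF (A : GAct Ω G) (g : G) {i : Fin (n + 1)} {F : MultiFacet Ω}
    (h : i ∈ F.1.1) : A.act g i ∈ (A.actF g F).1.1 := by
  rw [A.collapse]; exact Finset.mem_image.2 ⟨i, h, rfl⟩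

lemma GAct.actF_inv_actF (A : GAct Ω G) (g : G) (F : MultiFacet Ω) :
    A.actF g⁻¹ (A.actF g F) = F := by
  rw [map_inv]; exact Equiv.symm_apply_apply _ _

lemma forall_of_shift_eq (A : GAct Ω G) (g : G) (i : Fin (n + 1)) {I : Type}
    (β : MFi Ω i → I) (c : I) (h : ∀ F, A.shift g i β F = c) : ∀ F, β F = c := by
  intro F'
  have hmem : A.act g i ∈ (A.actF g F'.1).1.1 := A.mem_actF g F'.2
  have key : (⟨A.actF g⁻¹ (A.actF g F'.1),
      A.mem_shift g i ⟨A.actF g F'.1, hmem⟩⟩ : MFi Ω i) = F' :=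
    Subtype.ext (A.actF_inv_actF g F'.1)
  have h2 : β ⟨A.actF g⁻¹ (A.actF g F'.1), A.mem_shift g i ⟨A.actF g F'.1, hmem⟩⟩ = c :=
    h ⟨A.actF g F'.1, hmem⟩
  rw [key] at h2
  exact h2

/-- Transport between local polynomial spaces (zero if the block sizes differ). -/
def tr (u j : Fin (n + 1)) (q : LSpace m u) : LSpace m j :=
  if h : m u = m j then rename (Fin.cast h) q else 0

lemma tr_eq (u j : Fin (n + 1)) (h : m u = m j) (q : LSpace m u) :
    tr u j q = rename (Fin.cast h) q := dif_pos h

lemma rename_tr (u v z : Fin (n + 1)) (huv : m u = m v) (hvz : m v = m z) (q : LSpace m u) :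
    rename (Fin.cast hvz) (tr u v q) = tr u z q := by
  rw [tr_eq u v huv, tr_eq u z (huv.trans hvz), rename_rename]
  have hfun : (Fin.cast hvz ∘ Fin.cast huv) = Fin.cast (huv.trans hvz) :=
    funext fun k => Fin.ext rfl
  rw [hfun]

lemma emb_C (j : Fin (n + 1)) (r : ℝ) : emb m j (MvPolynomial.C r) = MvPolynomial.C r := by
  simp [emb]

/-- The merged local decomposition functions for a sum of rank-one decompositions. -/
def mergeQ {ι : Type} [Fintype ι] (h : ι → ∀ i : Fin (n + 1), LSpace m i)
    (i : Fin (n + 1)) (β : MFi Ω i → Fin (Fintype.card ι)) : LSpace m i :=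
  if hc : ∃ t : ι, ∀ F, β F = Fintype.equivFin ι t then h hc.choose i else 0

lemma mergeQ_eq (hΩ : IsWSC Ω) {ι : Type} [Fintype ι] (h : ι → ∀ i : Fin (n + 1), LSpace m i)
    (i : Fin (n + 1)) (β : MFi Ω i → Fin (Fintype.card ι)) (t : ι)
    (ht : ∀ F, β F = Fintype.equivFin ι t) : mergeQ (Ω := Ω) h i β = h t i := by
  have hc : ∃ t : ι, ∀ F, β F = Fintype.equivFin ι t := ⟨t, ht⟩
  have hch : hc.choose = t := by
    obtain ⟨F0⟩ := mfi_nonempty hΩ i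
    have h1 := hc.choose_spec F0
    have h2 := ht F0
    exact (Fintype.equivFin ι).injective (h1 ▸ h2)
  rw [mergeQ, dif_pos hc, hch]

lemma mergeQ_eq_zero {ι : Type} [Fintype ι] (h : ι → ∀ i : Fin (n + 1), LSpace m i)
    (i : Fin (n + 1)) (β : MFi Ω i → Fin (Fintype.card ι))
    (hc : ¬ ∃ t : ι, ∀ F, β F = Fintype.equivFin ι t) : mergeQ (Ω := Ω) h i β = 0 :=
  dif_neg hc

/-- Key merging lemma: a finite sum of equivariant rank-one products has an
`(Ω,G)`-decomposition. -/
lemma hasOGDec_sum (hΩ : IsWSC Ω) (hconn : Conn Ω) (A : GAct Ω G)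
    (hm : ∀ (g : G) (i : Fin (n + 1)), m (A.act g i) = m i)
    {ι : Type} [Fintype ι] (h : ι → ∀ i : Fin (n + 1), LSpace m i)
    (heq : ∀ (t : ι) (g : G) (i : Fin (n + 1)),
      rename (Fin.cast (hm g i)) (h t (A.act g i)) = h t i) :
    HasOGDec A hm (∑ t : ι, ∏ j : Fin (n + 1), emb m j (h t j)) (Fintype.card ι) := by
  classical
  set e := Fintype.equivFin ι with he
  refine ⟨fun i β => mergeQ (Ω := Ω) h i β, ?_, ?_⟩
  · -- the sum identity
    have hsplit := Finset.sum_filter_add_sum_filter_not Finset.univ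
      (fun α : MultiFacet Ω → Fin (Fintype.card ι) => ∃ t : ι, ∀ F, α F = e t)
      (fun α => ∏ i, emb m i (mergeQ (Ω := Ω) h i (restr α i)))
    have hzero : ∑ α ∈ Finset.univ.filter (fun α : MultiFacet Ω → Fin (Fintype.card ι) =>
        ¬ ∃ t : ι, ∀ F, α F = e t), ∏ i, emb m i (mergeQ (Ω := Ω) h i (restr α i)) = 0 := by
      refine Finset.sum_eq_zero fun α hα => ?_
      simp only [Finset.mem_filter, Finset.mem_univ, true_and] at hα
      have hbad : ∃ i : Fin (n + 1), ¬ ∃ t : ι, ∀ F : MFi Ω i, α F.1 = e t := by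
        by_contra hcon
        push_neg at hcon
        apply hα
        have hconst := locally_const hΩ hconn α
          (fun i => (hcon i).elim fun t ht => ⟨e t, ht⟩)
        obtain ⟨t0, ht0⟩ := hcon 0
        obtain ⟨F0⟩ := mfi_nonempty hΩ 0
        exact ⟨t0, fun F => (hconst F F0.1).trans (ht0 F0)⟩
      obtain ⟨i, hi⟩ := hbad
      refine Finset.prod_eq_zero (Finset.mem_univ i) ?_
      rw [mergeQ_eq_zero h i (restr α i) hi, map_zero]
    have himg : Finset.univ.filter (fun α : MultiFacet Ω → Fin (Fintype.card ι) =>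
        ∃ t : ι, ∀ F, α F = e t)
        = Finset.univ.image (fun t : ι => (fun _ : MultiFacet Ω => e t)) := by
      ext α
      simp only [Finset.mem_filter, Finset.mem_univ, true_and, Finset.mem_image]
      constructor
      · rintro ⟨t, ht⟩
        exact ⟨t, (funext fun F => ht F).symm⟩
      · rintro ⟨t, rfl⟩
        exact ⟨t, fun F => rfl⟩
    have hinj : ∀ t ∈ (Finset.univ : Finset ι), ∀ t' ∈ (Finset.univ : Finset ι),
        (fun _ : MultiFacet Ω => e t) = (fun _ : MultiFacet Ω => e t') → t = t' := by
      intro t _ t' _ hEq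
      obtain ⟨F0⟩ := multiFacet_nonempty hΩ
      exact e.injective (congrFun hEq F0)
    rw [← hsplit, hzero, add_zero, himg, Finset.sum_image hinj]
    refine Finset.sum_congr rfl fun t _ => Finset.prod_congr rfl fun i _ => ?_
    rw [mergeQ_eq hΩ h i (restr (fun _ : MultiFacet Ω => e t) i) t (fun F => rfl)]
  · -- equivariance
    intro g i β
    show rename (Fin.cast (hm g i)) (mergeQ (Ω := Ω) h (A.act g i) (A.shift g i β))
      = mergeQ (Ω := Ω) h i β
    by_cases hc : ∃ t : ι, ∀ F, β F = e t
    · obtain ⟨t, ht⟩ := hc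
      rw [mergeQ_eq hΩ h (A.act g i) (A.shift g i β) t (fun F => ht _),
        heq t g i, mergeQ_eq hΩ h i β t ht]
    · have hc' : ¬ ∃ t : ι, ∀ F, A.shift g i β F = e t := by
        rintro ⟨t, ht⟩
        exact hc ⟨t, forall_of_shift_eq A g i β (e t) ht⟩
      rw [mergeQ_eq_zero h (A.act g i) (A.shift g i β) hc',
        mergeQ_eq_zero h i β hc, map_zero]

/-- Every polynomial is a finite sum of products of local polynomials. -/
lemma exists_prod_dec (p : PSpace m) :
    ∃ (N : ℕ) (w : Fin N → ∀ j : Fin (n + 1), LSpace m j),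
      p = ∑ t, ∏ j, emb m j (w t j) := by
  induction p using MvPolynomial.induction_on with
  | C a =>
    refine ⟨1, fun _ j => if j = 0 then MvPolynomial.C a else 1, ?_⟩
    rw [Fin.sum_univ_one]
    have hemb : ∀ j : Fin (n + 1),
        emb m j (if j = 0 then MvPolynomial.C a else 1)
          = if j = 0 then (MvPolynomial.C a : PSpace m) else 1 := by
      intro j
      split
      · simp [emb]
      · simp [emb]
    simp only [hemb]
    rw [Finset.prod_ite_eq' Finset.univ (0 : Fin (n + 1))
      (fun _ => (MvPolynomial.C a : PSpace m))]
    simp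
  | add p q hp hq =>
    obtain ⟨N1, w1, h1⟩ := hp
    obtain ⟨N2, w2, h2⟩ := hq
    refine ⟨N1 + N2, Fin.addCases w1 w2, ?_⟩
    rw [Fin.sum_univ_add]
    simp only [Fin.addCases_left, Fin.addCases_right]
    rw [← h1, ← h2]
  | mul_X p v hp =>
    obtain ⟨N, w, hw⟩ := hp
    obtain ⟨i, k⟩ := v
    refine ⟨N, fun t j => w t j *
      (if h : j = i then (X (Fin.cast (congrArg m h).symm k) : LSpace m j) else 1), ?_⟩
    have hx : ∀ j : Fin (n + 1),
        emb m j (if h : j = i then (X (Fin.cast (congrArg m h).symm k) : LSpace m j) else 1)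
          = if j = i then (X ⟨i, k⟩ : PSpace m) else 1 := by
      intro j
      by_cases h : j = i
      · subst h
        rw [dif_pos rfl, if_pos rfl]
        simp only [emb, rename_X]
        exact congrArg (fun z : Fin (m j) => (X (⟨j, z⟩ : Σ i : Fin (n + 1), Fin (m i)) :
          PSpace m)) (Fin.ext rfl)
      · rw [dif_neg h, if_neg h, map_one]
    have key : ∀ t, (∏ j, emb m j (w t j *
        (if h : j = i then (X (Fin.cast (congrArg m h).symm k) : LSpace m j) else 1)))
          = (∏ j, emb m j (w t j)) * X ⟨i, k⟩ := by
      intro t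
      calc ∏ j, emb m j (w t j *
            (if h : j = i then (X (Fin.cast (congrArg m h).symm k) : LSpace m j) else 1))
          = ∏ j, (emb m j (w t j) * emb m j
            (if h : j = i then (X (Fin.cast (congrArg m h).symm k) : LSpace m j) else 1)) := by
            refine Finset.prod_congr rfl fun j _ => ?_
            rw [map_mul]
        _ = (∏ j, emb m j (w t j)) * ∏ j, emb m j
            (if h : j = i then (X (Fin.cast (congrArg m h).symm k) : LSpace m j) else 1) :=
            Finset.prod_mul_distrib
        _ = (∏ j, emb m j (w t j)) * X ⟨i, k⟩ := by
            rw [Finset.prod_congr rfl fun j _ => hx j,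
              Finset.prod_ite_eq' Finset.univ (i : Fin (n + 1))
                (fun _ => (X ⟨i, k⟩ : PSpace m))]
            simp
    rw [hw, Finset.sum_mul]
    exact Finset.sum_congr rfl fun t _ => (key t).symm

/-- How the variable-permutation action transforms a product of local polynomials. -/
lemma rename_permVar_prod (A : GAct Ω G)
    (hm : ∀ (g : G) (i : Fin (n + 1)), m (A.act g i) = m i) (g : G)
    (w : ∀ j : Fin (n + 1), LSpace m j) :
    rename (permVar A hm g) (∏ j, emb m j (w j))
      = ∏ j, emb m j (tr (A.act g⁻¹ j) j (w (A.act g⁻¹ j))) := by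
  rw [map_prod]
  have step1 : ∀ j, rename (permVar A hm g) (emb m j (w j))
      = emb m (A.act g j) (rename (Fin.cast (hm g j).symm) (w j)) := by
    intro j
    simp only [emb]
    rw [rename_rename, rename_rename]
    rfl
  rw [Finset.prod_congr rfl fun j _ => step1 j]
  rw [← Equiv.prod_comp (A.act g)
    (fun j' => emb m j' (tr (A.act g⁻¹ j') j' (w (A.act g⁻¹ j'))))]
  refine Finset.prod_congr rfl fun j _ => ?_
  have hinv : A.act g⁻¹ (A.act g j) = j := by
    rw [map_inv]; exact Equiv.symm_apply_apply _ _
  rw [hinv, tr_eq j (A.act g j) (hm g j).symm]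

/-- The inclusion–exclusion local family. -/
def hSfam (A : GAct Ω G) (S : Finset (Fin (n + 1)))
    (w : ∀ j : Fin (n + 1), LSpace m j) (j : Fin (n + 1)) : LSpace m j :=
  ∑ u : Fin (n + 1), if u ∈ S ∧ ∃ g : G, A.act g u = j then tr u j (w u) else 0

lemma hSfam_equivariant (A : GAct Ω G)
    (hm : ∀ (g : G) (i : Fin (n + 1)), m (A.act g i) = m i)
    (S : Finset (Fin (n + 1))) (w : ∀ j : Fin (n + 1), LSpace m j)
    (g : G) (i : Fin (n + 1)) :
    rename (Fin.cast (hm g i)) (hSfam A S w (A.act g i)) = hSfam A S w i := by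
  unfold hSfam
  rw [map_sum]
  refine Finset.sum_congr rfl fun u _ => ?_
  by_cases hcond : u ∈ S ∧ ∃ g' : G, A.act g' u = i
  · obtain ⟨hu, g', hg'⟩ := hcond
    have hcond2 : u ∈ S ∧ ∃ g'' : G, A.act g'' u = A.act g i :=
      ⟨hu, ⟨g * g', by rw [map_mul, Equiv.Perm.mul_apply, hg']⟩⟩
    rw [if_pos hcond2, if_pos ⟨hu, ⟨g', hg'⟩⟩]
    have h1 : m i = m u := by rw [← hg']; exact hm g' u
    have hmu : m u = m (A.act g i) := by rw [hm g i]; exact h1.symm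
    exact rename_tr u (A.act g i) i hmu (hm g i) (w u)
  · have hcond2 : ¬ (u ∈ S ∧ ∃ g'' : G, A.act g'' u = A.act g i) := by
      rintro ⟨hu, g'', hg''⟩
      refine hcond ⟨hu, ⟨g⁻¹ * g'', ?_⟩⟩
      rw [map_mul, Equiv.Perm.mul_apply, hg'', map_inv, Equiv.Perm.inv_def, Equiv.symm_apply_apply]
    rw [if_neg hcond2, if_neg hcond, map_zero]

/-- Inclusion–exclusion coefficient identity. -/
lemma incl_excl_coeff (T : Finset (Fin (n + 1))) :
    ∑ S : Finset (Fin (n + 1)), (if T ⊆ S then ((-1 : ℝ)) ^ (n + 1 - S.card) else 0)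
      = if T = Finset.univ then 1 else 0 := by
  classical
  have hpow : ∀ (W : Finset (Fin (n + 1))),
      ∑ U ∈ W.powerset, (-1 : ℝ) ^ (W.card - U.card) = if W = ∅ then 1 else 0 := by
    intro W
    have hterm : ∀ U ∈ W.powerset,
        (-1 : ℝ) ^ (W.card - U.card) = (-1) ^ W.card * (-1) ^ U.card := by
      intro U hU
      have hle := Finset.card_le_card (Finset.mem_powerset.mp hU)
      have h2 : ((-1 : ℝ)) ^ U.card * ((-1 : ℝ)) ^ U.card = 1 := by
        rw [← mul_pow]; norm_num
      calc (-1 : ℝ) ^ (W.card - U.card)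
          = (-1 : ℝ) ^ (W.card - U.card) * (((-1 : ℝ)) ^ U.card * ((-1 : ℝ)) ^ U.card) := by
            rw [h2, mul_one]
        _ = ((-1 : ℝ) ^ (W.card - U.card) * ((-1 : ℝ)) ^ U.card) * ((-1 : ℝ)) ^ U.card := by
            ring
        _ = (-1 : ℝ) ^ W.card * (-1 : ℝ) ^ U.card := by
            rw [← pow_add, Nat.sub_add_cancel hle]
    rw [Finset.sum_congr rfl hterm, ← Finset.mul_sum]
    have hZ : ∑ U ∈ W.powerset, ((-1 : ℝ)) ^ U.card = if W = ∅ then 1 else 0 := by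
      have h0 := Finset.sum_powerset_neg_one_pow_card (x := W)
      calc ∑ U ∈ W.powerset, ((-1 : ℝ)) ^ U.card
          = ((∑ U ∈ W.powerset, (-1 : ℤ) ^ U.card : ℤ) : ℝ) := by push_cast; rfl
        _ = if W = ∅ then 1 else 0 := by rw [h0]; split <;> simp
    rw [hZ]
    by_cases hW : W = ∅
    · subst hW; simp
    · simp [hW]
  rw [← Finset.powerset_univ, ← Finset.sum_filter]
  have hreindex : ∑ S ∈ (Finset.univ : Finset (Fin (n + 1))).powerset.filter (fun S => T ⊆ S),
      (-1 : ℝ) ^ (n + 1 - S.card)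
      = ∑ U ∈ ((Finset.univ : Finset (Fin (n + 1))) \ T).powerset,
        (-1 : ℝ) ^ (((Finset.univ : Finset (Fin (n + 1))) \ T).card - U.card) := by
    refine Finset.sum_nbij' (fun S => S \ T) (fun U => T ∪ U) ?_ ?_ ?_ ?_ ?_
    · intro S hS
      simp only [Finset.mem_filter, Finset.mem_powerset] at hS
      exact Finset.mem_powerset.mpr (Finset.sdiff_subset_sdiff hS.1 Finset.Subset.rfl)
    · intro U hU
      simp only [Finset.mem_powerset] at hU
      simp only [Finset.mem_filter, Finset.mem_powerset]
      exact ⟨Finset.subset_univ _, Finset.subset_union_left⟩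
    · intro S hS
      simp only [Finset.mem_filter, Finset.mem_powerset] at hS
      exact Finset.union_sdiff_of_subset hS.2
    · intro U hU
      simp only [Finset.mem_powerset] at hU
      have hdisj : Disjoint T U := ((Finset.subset_sdiff.mp hU).2).symm
      exact Finset.union_sdiff_cancel_left hdisj
    · intro S hS
      simp only [Finset.mem_filter, Finset.mem_powerset] at hS
      congr 1
      have hcard : (S \ T).card = S.card - T.card := Finset.card_sdiff_of_subset hS.2
      have hcardU : ((Finset.univ : Finset (Fin (n + 1))) \ T).card = (n + 1) - T.card := by
        rw [Finset.card_sdiff_of_subset (Finset.subset_univ _), Finset.card_univ, Fintype.card_fin]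
      have hc1 : S.card ≤ n + 1 := by
        have := Finset.card_le_card hS.1
        simpa [Finset.card_univ] using this
      have hc2 : T.card ≤ S.card := Finset.card_le_card hS.2
      rw [hcard, hcardU]
      omega
  rw [hreindex, hpow]
  have hiff : ((Finset.univ : Finset (Fin (n + 1))) \ T = ∅) ↔ T = Finset.univ := by
    rw [Finset.sdiff_eq_empty_iff_subset, Finset.univ_subset_iff]
  by_cases hT : T = Finset.univ
  · rw [if_pos (hiff.mpr hT), if_pos hT]
  · rw [if_neg (fun h => hT (hiff.mp h)), if_neg hT]

/-- The inclusion–exclusion identity for the symmetrized products. -/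
lemma sum_powerset_eq (A : GAct Ω G) [Fintype G] (w : ∀ j : Fin (n + 1), LSpace m j) :
    ∑ S : Finset (Fin (n + 1)),
        ((-1 : ℝ) ^ (n + 1 - S.card)) • (∏ j, emb m j (hSfam A S w j))
      = ∑ f ∈ Finset.univ.filter (fun f : Fin (n + 1) → Fin (n + 1) =>
          Function.Surjective f ∧ ∀ j, ∃ g : G, A.act g (f j) = j),
          ∏ j, emb m j (tr (f j) j (w (f j))) := by
  classical
  have expand : ∀ S : Finset (Fin (n + 1)), (∏ j, emb m j (hSfam A S w j))
      = ∑ f : Fin (n + 1) → Fin (n + 1), ∏ j,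
        (if f j ∈ S ∧ ∃ g : G, A.act g (f j) = j then emb m j (tr (f j) j (w (f j))) else 0) := by
    intro S
    have h1 : ∀ j : Fin (n + 1), emb m j (hSfam A S w j)
        = ∑ u : Fin (n + 1),
          (if u ∈ S ∧ ∃ g : G, A.act g u = j then emb m j (tr u j (w u)) else 0) := by
      intro j
      unfold hSfam
      rw [map_sum]
      refine Finset.sum_congr rfl fun u _ => ?_
      by_cases hcu : u ∈ S ∧ ∃ g : G, A.act g u = j
      · rw [if_pos hcu, if_pos hcu]
      · rw [if_neg hcu, if_neg hcu, map_zero]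
    rw [Finset.prod_congr rfl fun j _ => h1 j]
    rw [Finset.prod_univ_sum]
    rw [Fintype.piFinset_univ]
  rw [Finset.sum_congr rfl fun S _ => congrArg _ (expand S)]
  simp only [Finset.smul_sum]
  rw [Finset.sum_comm]
  rw [Finset.sum_filter]
  refine Finset.sum_congr rfl fun f _ => ?_
  by_cases hP : ∀ j, ∃ g : G, A.act g (f j) = j
  · have hprod : ∀ S : Finset (Fin (n + 1)),
        (∏ j, (if f j ∈ S ∧ ∃ g : G, A.act g (f j) = j
          then emb m j (tr (f j) j (w (f j))) else 0))
        = if ∀ j, f j ∈ S then (∏ j, emb m j (tr (f j) j (w (f j)))) else 0 := by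
      intro S
      by_cases hall : ∀ j, f j ∈ S
      · rw [if_pos hall]
        exact Finset.prod_congr rfl fun j _ => if_pos ⟨hall j, hP j⟩
      · rw [if_neg hall]
        push_neg at hall
        obtain ⟨j0, hj0⟩ := hall
        exact Finset.prod_eq_zero (Finset.mem_univ j0) (if_neg (fun hc => hj0 hc.1))
    rw [Finset.sum_congr rfl fun S _ => congrArg _ (hprod S)]
    have hstep : ∑ S : Finset (Fin (n + 1)), ((-1 : ℝ) ^ (n + 1 - S.card)) •
        (if ∀ j, f j ∈ S then (∏ j, emb m j (tr (f j) j (w (f j)))) else 0)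
        = (∑ S : Finset (Fin (n + 1)),
            if Finset.univ.image f ⊆ S then ((-1 : ℝ) ^ (n + 1 - S.card)) else 0) •
          ∏ j, emb m j (tr (f j) j (w (f j))) := by
      rw [Finset.sum_smul]
      refine Finset.sum_congr rfl fun S _ => ?_
      have himg : Finset.univ.image f ⊆ S ↔ ∀ j, f j ∈ S := by
        simp [Finset.image_subset_iff]
      by_cases hc : ∀ j, f j ∈ S
      · rw [if_pos hc, if_pos (himg.mpr hc)]
      · rw [if_neg hc, if_neg (fun hh => hc (himg.mp hh)), smul_zero, zero_smul]
    rw [hstep, incl_excl_coeff]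
    have hsurj : Finset.univ.image f = Finset.univ ↔ Function.Surjective f := by
      constructor
      · intro hh x
        have : x ∈ Finset.univ.image f := by rw [hh]; exact Finset.mem_univ x
        obtain ⟨a, _, ha⟩ := Finset.mem_image.mp this
        exact ⟨a, ha⟩
      · intro hs
        refine Finset.eq_univ_iff_forall.mpr fun x => ?_
        obtain ⟨a, ha⟩ := hs x
        exact Finset.mem_image.mpr ⟨a, Finset.mem_univ a, ha⟩
    by_cases hs : Function.Surjective f
    · rw [if_pos (hsurj.mpr hs), one_smul, if_pos ⟨hs, hP⟩]
    · rw [if_neg (fun hh => hs (hsurj.mp hh)), zero_smul, if_neg (fun hc => hs hc.1)]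
  · have hz : ∀ S : Finset (Fin (n + 1)),
        (∏ j, (if f j ∈ S ∧ ∃ g : G, A.act g (f j) = j
          then emb m j (tr (f j) j (w (f j))) else 0)) = 0 := by
      intro S
      obtain ⟨j0, hj0⟩ := not_forall.mp hP
      exact Finset.prod_eq_zero (Finset.mem_univ j0) (if_neg (fun hc => hj0 hc.2))
    rw [Finset.sum_congr rfl fun S _ => congrArg _ (hz S)]
    rw [if_neg (fun hc => hP hc.2)]
    simp

end Statement5Aux
section Statement5Core

variable {n : ℕ} {Ω : Finset (Fin (n + 1)) → ℕ} {G : Type} [Group G] {m : Fin (n + 1) → ℕ}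

set_option maxHeartbeats 1000000 in
/-- Averaging a product over the group, via blending and inclusion–exclusion. -/
lemma sum_rename_prod (A : GAct Ω G) [Fintype G] (hblend : A.Blending)
    (hm : ∀ (g : G) (i : Fin (n + 1)), m (A.act g i) = m i) :
    ∃ k : ℕ, 0 < k ∧ ∀ w : ∀ j : Fin (n + 1), LSpace m j,
      ∑ g : G, rename (permVar A hm g) (∏ j, emb m j (w j))
        = k • ∑ S : Finset (Fin (n + 1)),
            ((-1 : ℝ) ^ (n + 1 - S.card)) • (∏ j, emb m j (hSfam A S w j)) := by
  classical
  set ψ : G → (Fin (n + 1) → Fin (n + 1)) := fun g j => A.act g⁻¹ j with hψ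
  set k : ℕ := (Finset.univ.filter fun g : G => ψ g = ψ 1).card with hk
  have hkpos : 0 < k := by
    rw [hk]
    exact Finset.card_pos.mpr ⟨1, Finset.mem_filter.mpr ⟨Finset.mem_univ 1, rfl⟩⟩
  refine ⟨k, hkpos, fun w => ?_⟩
  have hfibers : ∀ b ∈ Finset.univ.image ψ,
      (Finset.univ.filter fun g : G => ψ g = b).card = k := by
    intro b hb
    obtain ⟨g₀, _, rfl⟩ := Finset.mem_image.mp hb
    rw [hk]
    refine Finset.card_bij' (fun g _ => g₀⁻¹ * g) (fun g _ => g₀ * g) ?_ ?_ ?_ ?_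
    · intro g hg
      simp only [Finset.mem_filter, Finset.mem_univ, true_and] at hg ⊢
      funext j
      have hg' := congrFun hg
      simp only [hψ] at hg' ⊢
      rw [mul_inv_rev, map_mul, Equiv.Perm.mul_apply, inv_inv]
      rw [hg' (A.act g₀ j), map_inv, Equiv.Perm.inv_def, Equiv.symm_apply_apply]
      simp
    · intro g hg
      simp only [Finset.mem_filter, Finset.mem_univ, true_and] at hg ⊢
      funext j
      have hg' := congrFun hg
      simp only [hψ] at hg' ⊢
      rw [mul_inv_rev, map_mul, Equiv.Perm.mul_apply]
      have h1 : ∀ x, A.act g⁻¹ x = x := by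
        intro x
        have := hg' x
        simpa using this
      rw [h1]
    · intro g _; group
    · intro g _; group
  have hPB : Finset.univ.image ψ
      = Finset.univ.filter (fun f : Fin (n + 1) → Fin (n + 1) =>
          Function.Surjective f ∧ ∀ j, ∃ g : G, A.act g (f j) = j) := by
    ext f
    simp only [Finset.mem_image, Finset.mem_filter, Finset.mem_univ, true_and]
    constructor
    · rintro ⟨g, -, rfl⟩
      constructor
      · intro x
        refine ⟨A.act g x, ?_⟩
        simp only [hψ]
        rw [map_inv]
        exact Equiv.symm_apply_apply _ _
      · intro j
        refine ⟨g, ?_⟩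
        simp only [hψ]
        rw [map_inv]
        exact Equiv.apply_symm_apply _ _
    · rintro ⟨hsurj, horb⟩
      choose gs hgs using horb
      have hfs : ∀ j, A.act ((gs j)⁻¹) j = f j := by
        intro j
        refine (A.act (gs j)).injective ?_
        rw [hgs j, map_inv, Equiv.Perm.inv_def, Equiv.apply_symm_apply]
      obtain ⟨g, hg⟩ := hblend (fun j => (gs j)⁻¹)
        (by
          have hfe : (fun j => A.act ((gs j)⁻¹) j) = f := funext hfs
          rw [hfe]; exact hsurj)
      refine ⟨g⁻¹, funext fun j => ?_⟩
      simp only [hψ, inv_inv]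
      rw [hg j, hfs j]
  calc ∑ g : G, rename (permVar A hm g) (∏ j, emb m j (w j))
      = ∑ g : G, ∏ j, emb m j (tr (ψ g j) j (w (ψ g j))) := by
        refine Finset.sum_congr rfl fun g _ => ?_
        exact rename_permVar_prod A hm g w
    _ = ∑ b ∈ Finset.univ.image ψ, (Finset.univ.filter fun g : G => ψ g = b).card •
          ∏ j, emb m j (tr (b j) j (w (b j))) :=
        Finset.sum_comp (fun b : Fin (n + 1) → Fin (n + 1) =>
          ∏ j, emb m j (tr (b j) j (w (b j)))) ψ
    _ = ∑ b ∈ Finset.univ.image ψ, k • ∏ j, emb m j (tr (b j) j (w (b j))) := by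
        refine Finset.sum_congr rfl fun b hb => ?_
        rw [hfibers b hb]
    _ = k • ∑ b ∈ Finset.univ.image ψ, ∏ j, emb m j (tr (b j) j (w (b j))) := by
        rw [Finset.smul_sum]
    _ = k • ∑ S : Finset (Fin (n + 1)),
          ((-1 : ℝ) ^ (n + 1 - S.card)) • (∏ j, emb m j (hSfam A S w j)) := by
        rw [hPB]
        exact congrArg (fun z => k • z) (sum_powerset_eq A w).symm

/-- Core lemma: every invariant polynomial is a linear combination of equivariant
rank-one products. -/
lemma core_decomp (A : GAct Ω G) [Fintype G] (hblend : A.Blending)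
    (hm : ∀ (g : G) (i : Fin (n + 1)), m (A.act g i) = m i)
    (p : PSpace m) (hinv : GInvPoly A hm p) :
    ∃ (ι : Type) (_ : Fintype ι) (c : ι → ℝ) (h : ι → ∀ j : Fin (n + 1), LSpace m j),
      (∀ (t : ι) (g : G) (i : Fin (n + 1)),
        rename (Fin.cast (hm g i)) (h t (A.act g i)) = h t i) ∧
      p = ∑ t, c t • ∏ j, emb m j (h t j) := by
  classical
  obtain ⟨N, w, hw⟩ := exists_prod_dec p
  obtain ⟨k, hkpos, hsum⟩ := sum_rename_prod A hblend hm
  have hGpos : (0 : ℝ) < Fintype.card G := by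
    exact_mod_cast Fintype.card_pos
  refine ⟨Fin N × Finset (Fin (n + 1)), inferInstance,
    fun ts => (Fintype.card G : ℝ)⁻¹ * ((k : ℝ) * ((-1 : ℝ) ^ (n + 1 - ts.2.card))),
    fun ts => hSfam A ts.2 (w ts.1),
    fun ts g i => hSfam_equivariant A hm ts.2 (w ts.1) g i, ?_⟩
  have h1 : (Fintype.card G : ℝ) • p = ∑ g : G, rename (permVar A hm g) p := by
    calc (Fintype.card G : ℝ) • p = (Fintype.card G) • p := Nat.cast_smul_eq_nsmul ℝ _ p
      _ = ∑ _g : G, p := by rw [Finset.sum_const, Finset.card_univ]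
      _ = ∑ g : G, rename (permVar A hm g) p :=
          Finset.sum_congr rfl fun g _ => (hinv g).symm
  have h2 : ∑ g : G, rename (permVar A hm g) p
      = ∑ t : Fin N, (k • ∑ S : Finset (Fin (n + 1)),
          ((-1 : ℝ) ^ (n + 1 - S.card)) • (∏ j, emb m j (hSfam A S (w t) j))) := by
    calc ∑ g : G, rename (permVar A hm g) p
        = ∑ g : G, ∑ t : Fin N, rename (permVar A hm g) (∏ j, emb m j (w t j)) := by
          refine Finset.sum_congr rfl fun g _ => ?_
          rw [hw, map_sum]
      _ = ∑ t : Fin N, ∑ g : G, rename (permVar A hm g) (∏ j, emb m j (w t j)) :=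
          Finset.sum_comm
      _ = ∑ t : Fin N, (k • ∑ S : Finset (Fin (n + 1)),
            ((-1 : ℝ) ^ (n + 1 - S.card)) • (∏ j, emb m j (hSfam A S (w t) j))) :=
          Finset.sum_congr rfl fun t _ => hsum (w t)
  have h3 : p = (Fintype.card G : ℝ)⁻¹ • ∑ t : Fin N, (k • ∑ S : Finset (Fin (n + 1)),
      ((-1 : ℝ) ^ (n + 1 - S.card)) • (∏ j, emb m j (hSfam A S (w t) j))) := by
    rw [← h2, ← h1, inv_smul_smul₀ (ne_of_gt hGpos)]
  rw [h3, Fintype.sum_prod_type]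
  rw [Finset.smul_sum]
  refine Finset.sum_congr rfl fun t _ => ?_
  rw [← Nat.cast_smul_eq_nsmul ℝ k, Finset.smul_sum, Finset.smul_sum]
  refine Finset.sum_congr rfl fun S _ => ?_
  rw [smul_smul, smul_smul, mul_assoc]

end Statement5Core
set_option maxHeartbeats 2000000 in
/-- invariant decompositions with blending group actions: every `G`-invariant
polynomial is a difference of two polynomials admitting `(Ω,G)`-decompositions, with no
difference needed for even `n`. -/
theorem statement5 {n : ℕ} {Ω : Finset (Fin (n + 1)) → ℕ} (hΩ : IsWSC Ω) (hconn : Conn Ω)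
    {G : Type} [Group G] [Fintype G] (A : GAct Ω G) (hblend : A.Blending)
    {m : Fin (n + 1) → ℕ} (hm : ∀ (g : G) (i : Fin (n + 1)), m (A.act g i) = m i)
    (p : PSpace m) (hinv : GInvPoly A hm p) :
    (∃ q₁ q₂ : PSpace m,
      (∃ r, HasOGDec A hm q₁ r) ∧ (∃ r, HasOGDec A hm q₂ r) ∧ p = q₁ - q₂) ∧
    (Even n → ∃ r, HasOGDec A hm p r) := by
  classical
  obtain ⟨ι, _inst, c, h, hequiv, hp⟩ := core_decomp A hblend hm p hinv
  -- a combination with (n+1)-th-rootable coefficients has an (Ω,G)-decomposition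
  have key : ∀ c' : ι → ℝ, (∀ t, ∃ r : ℝ, r ^ (n + 1) = c' t) →
      ∃ r, HasOGDec A hm (∑ t, c' t • ∏ j, emb m j (h t j)) r := by
    intro c' hc'
    choose rt hrt using hc'
    have heq' : ∀ (t : ι) (g : G) (i : Fin (n + 1)),
        rename (Fin.cast (hm g i))
          ((fun (t : ι) (i : Fin (n + 1)) => (MvPolynomial.C (rt t) : LSpace m i) * h t i) t (A.act g i))
          = (MvPolynomial.C (rt t) : LSpace m i) * h t i := by
      intro t g i
      rw [map_mul, rename_C, hequiv]
    have hdec := hasOGDec_sum hΩ hconn A hm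
      (fun (t : ι) (i : Fin (n + 1)) => (MvPolynomial.C (rt t) : LSpace m i) * h t i) heq'
    have hsummand : ∀ t : ι, (∏ j, emb m j ((MvPolynomial.C (rt t) : LSpace m j) * h t j))
        = c' t • ∏ j, emb m j (h t j) := by
      intro t
      have hfac : ∀ j : Fin (n + 1), emb m j ((MvPolynomial.C (rt t) : LSpace m j) * h t j)
          = (MvPolynomial.C (rt t) : PSpace m) * emb m j (h t j) := by
        intro j
        rw [map_mul, emb_C]
      calc (∏ j, emb m j ((MvPolynomial.C (rt t) : LSpace m j) * h t j))
          = ∏ j, ((MvPolynomial.C (rt t) : PSpace m) * emb m j (h t j)) :=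
            Finset.prod_congr rfl fun j _ => hfac j
        _ = (∏ _j : Fin (n + 1), (MvPolynomial.C (rt t) : PSpace m))
              * ∏ j, emb m j (h t j) := Finset.prod_mul_distrib
        _ = MvPolynomial.C (rt t ^ (n + 1)) * ∏ j, emb m j (h t j) := by
            rw [Finset.prod_const, Finset.card_univ, Fintype.card_fin, ← MvPolynomial.C_pow]
        _ = c' t • ∏ j, emb m j (h t j) := by
            rw [hrt t, ← MvPolynomial.smul_eq_C_mul]
    refine ⟨Fintype.card ι, ?_⟩
    have hrw : (∑ t, c' t • ∏ j, emb m j (h t j))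
        = ∑ t : ι, ∏ j, emb m j ((MvPolynomial.C (rt t) : LSpace m j) * h t j) :=
      Finset.sum_congr rfl fun t _ => (hsummand t).symm
    rw [hrw]
    exact hdec
  constructor
  · refine ⟨∑ t, (max (c t) 0) • ∏ j, emb m j (h t j),
      ∑ t, (max (-(c t)) 0) • ∏ j, emb m j (h t j), ?_, ?_, ?_⟩
    · refine key _ fun t => ⟨(max (c t) 0) ^ (((n + 1 : ℕ) : ℝ))⁻¹, ?_⟩
      exact Real.rpow_inv_natCast_pow (le_max_right _ _) (Nat.succ_ne_zero n)
    · refine key _ fun t => ⟨(max (-(c t)) 0) ^ (((n + 1 : ℕ) : ℝ))⁻¹, ?_⟩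
      exact Real.rpow_inv_natCast_pow (le_max_right _ _) (Nat.succ_ne_zero n)
    · rw [hp, ← Finset.sum_sub_distrib]
      refine Finset.sum_congr rfl fun t _ => ?_
      rw [← sub_smul, max_zero_sub_max_neg_zero_eq_self]
  · intro hev
    have hodd : Odd (n + 1) := Even.add_one hev
    have hroots : ∀ t, ∃ r : ℝ, r ^ (n + 1) = c t := by
      intro t
      by_cases hc : 0 ≤ c t
      · exact ⟨(c t) ^ (((n + 1 : ℕ) : ℝ))⁻¹,
          Real.rpow_inv_natCast_pow hc (Nat.succ_ne_zero n)⟩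
      · refine ⟨-((-(c t)) ^ (((n + 1 : ℕ) : ℝ))⁻¹), ?_⟩
        rw [hodd.neg_pow, Real.rpow_inv_natCast_pow (by linarith) (Nat.succ_ne_zero n),
          neg_neg]
    rw [hp]
    exact key c hroots

end
end PolyDec
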